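/- Let P_n denote the family of all posets on n elements. Then min over P in P_n of ao(P) equals ⌈√n⌉. In particular, every poset P on n elements satisfies ao(P) ≥ ⌈√n⌉, and there exists a poset on n elements (a complete multipartite ordering) achieving ao(P) = ⌈√n⌉. -/

import Mathlib

/-- `U` induces a disjoint union of chains such that any two elements belonging to different
chains are incomparable; equivalently, comparability restricted to `U` is transitive
(so the comparability graph induced on `U` is a vertex-disjoint union of cliques). -/
def IsChainUnion {α : Type*} [PartialOrder α] (U : Finset α) : Prop :=
  ∀ x ∈ U, ∀ y ∈ U, ∀ z ∈ U,
    (x ≤ y ∨ y ≤ x) → (y ≤ z ∨ z ≤ y) → (x ≤ z ∨ z ≤ x)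

/-- `ao α`: the maximum cardinality of a subset of the finite poset `α` that is a
disjoint union of chains with elements of different chains incomparable. -/
noncomputable def ao (α : Type*) [Fintype α] [PartialOrder α] : ℕ :=
  sSup {m | ∃ U : Finset α, IsChainUnion U ∧ U.card = m}

/-- The height of a finite poset: the maximum size of a chain. -/
noncomputable def heightP (α : Type*) [Fintype α] [PartialOrder α] : ℕ :=
  sSup {m | ∃ C : Finset α, IsChain (· ≤ ·) (↑C : Set α) ∧ C.card = m}

/-- The width of a finite poset: the maximum size of an antichain. -/
noncomputable def widthP (α : Type*) [Fintype α] [PartialOrder α] : ℕ :=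
  sSup {m | ∃ A : Finset α, IsAntichain (· ≤ ·) (↑A : Set α) ∧ A.card = m}

/-- The cover graph of a poset: `x` and `y` are adjacent iff one covers the other. -/
def coverGraph (α : Type*) [PartialOrder α] : SimpleGraph α where
  Adj x y := x ⋖ y ∨ y ⋖ x
  symm := ⟨fun x y h => h.symm⟩
  loopless := ⟨fun x h => by rcases h with h | h <;> exact absurd h.lt (lt_irrefl x)⟩

/-- A poset is acyclic if its cover graph has no cycles. -/
def AcyclicPoset (α : Type*) [PartialOrder α] : Prop := (coverGraph α).IsAcyclic

/-- A poset is connected if its cover graph is connected. -/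
def ConnectedPoset (α : Type*) [PartialOrder α] : Prop := (coverGraph α).Connected

/-- A poset is `N`-free if there are no `p1, p2, p3, p4` with `p1 > p3`, `p1 > p4`, `p2 > p4`,
`p1 ∦ p2`, `p2 ∦ p3`, `p3 ∦ p4`. -/
def NFree (α : Type*) [PartialOrder α] : Prop :=
  ¬ ∃ p1 p2 p3 p4 : α, p3 < p1 ∧ p4 < p1 ∧ p4 < p2 ∧
      ¬(p1 ≤ p2 ∨ p2 ≤ p1) ∧ ¬(p2 ≤ p3 ∨ p3 ≤ p2) ∧ ¬(p3 ≤ p4 ∨ p4 ≤ p3)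

/-- A poset is `V`-free if there are no `p1 < p2`, `p1 < p3` with `p2` incomparable to `p3`. -/
def VFree (α : Type*) [PartialOrder α] : Prop :=
  ¬ ∃ p1 p2 p3 : α, p1 < p2 ∧ p1 < p3 ∧ ¬(p2 ≤ p3 ∨ p3 ≤ p2)

/-- `ao` of the family `T_n` of all acyclic posets on `n` elements:
the minimum of `ao P` over acyclic posets `P` of size `n`. -/
noncomputable def aoT (n : ℕ) : ℕ :=
  sInf {m | ∃ P : PartialOrder (Fin n),
    @AcyclicPoset (Fin n) P ∧ @ao (Fin n) (Fin.fintype n) P = m}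

/-- `Λ(a, h)`: the maximum cardinality of a `V`-free poset `P` with `ao P = a` and
height at most `h`. -/
noncomputable def Lam (a h : ℕ) : ℕ :=
  sSup {n | ∃ P : PartialOrder (Fin n), @VFree (Fin n) P ∧
    @ao (Fin n) (Fin.fintype n) P = a ∧ @heightP (Fin n) (Fin.fintype n) P ≤ h}

/-- `Λ(a) = Λ(a, a)`. -/
noncomputable def Lambda (a : ℕ) : ℕ := Lam a a

/-- `X(a)`: the maximum cardinality of an acyclic and `N`-free poset `P` with `ao P = a`. -/
noncomputable def Xmax (a : ℕ) : ℕ :=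
  sSup {n | ∃ P : PartialOrder (Fin n), @AcyclicPoset (Fin n) P ∧
    @NFree (Fin n) P ∧ @ao (Fin n) (Fin.fintype n) P = a}

/-!
A chain and an antichain are both chain unions. By Mirsky's argument every element has height
less than `ao P` and the levels of the height function are antichains, so `n ≤ ao(P)²`.
Conversely, stack `n` points as at most `k = ⌈√n⌉` antichains of size at most `k`: a chain
union of this poset either lies in one antichain or meets each of them at most once, so `ao ≤ k`.
-/

open Finset

section ChainUnion

variable {α : Type*} [PartialOrder α]

lemma IsChain.isChainUnion {U : Finset α} (hU : IsChain (· ≤ ·) (U : Set α)) :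
    IsChainUnion U := by
  intro x hx _ _ z hz _ _
  obtain rfl | hxz := eq_or_ne x z
  · exact Or.inl le_rfl
  · exact hU hx hz hxz

lemma IsAntichain.isChainUnion {U : Finset α} (hU : IsAntichain (· ≤ ·) (U : Set α)) :
    IsChainUnion U := by
  intro x hx y hy z hz hxy hyz
  obtain rfl : x = y := by
    by_contra hne
    exact hxy.elim (hU hx hy hne) (hU hy hx (Ne.symm hne))
  exact hyz

variable [Fintype α]

lemma le_ao {U : Finset α} (hU : IsChainUnion U) : #U ≤ ao α :=
  le_csSup ⟨Fintype.card α, by rintro _ ⟨V, -, rfl⟩; exact card_le_univ V⟩ ⟨U, hU, rfl⟩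

lemma ao_le {k : ℕ} (h : ∀ U : Finset α, IsChainUnion U → #U ≤ k) : ao α ≤ k :=
  csSup_le ⟨0, ∅, by simp [IsChainUnion], rfl⟩ (by rintro _ ⟨U, hU, rfl⟩; exact h U hU)

lemma LTSeries.length_lt_ao (p : LTSeries α) : p.length < ao α := by
  classical
  have hcard : #(univ.image p) = p.length + 1 := by
    rw [card_image_of_injective _ p.strictMono.injective, card_univ, Fintype.card_fin]
  have hchain : IsChain (· ≤ ·) (univ.image p : Set α) := by
    rw [coe_image, coe_univ, Set.image_univ]
    exact p.strictMono.monotone.isChain_range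
  exact Nat.lt_of_succ_le (hcard ▸ le_ao hchain.isChainUnion :)

lemma Order.height_ne_top_of_fintype (x : α) : Order.height x ≠ ⊤ := by
  intro htop
  obtain ⟨p, -, hp⟩ := Order.exists_series_of_le_height x (n := ao α) (htop ▸ le_top)
  exact (p.length_lt_ao).ne hp

theorem card_le_ao_mul_ao : Fintype.card α ≤ ao α * ao α := by
  classical
  let r : α → ℕ := fun x => (Order.height x).toNat
  have hr : ∀ x, (r x : ℕ∞) = Order.height x := fun x =>
    ENat.natCast_toNat (Order.height_ne_top_of_fintype x)
  have hr_lt : ∀ x, r x < ao α := fun x => by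
    obtain ⟨p, -, hp⟩ := Order.exists_series_of_le_height x (hr x).le
    exact hp ▸ p.length_lt_ao
  have hr_strictMono : StrictMono r := fun x y hxy => by
    have := Order.height_strictMono hxy (hr x ▸ ENat.natCast_lt_top _)
    rwa [← hr, ← hr, Nat.cast_lt] at this
  have hlevel : ∀ i, #{x | r x = i} ≤ ao α := fun i => by
    refine le_ao (IsAntichain.isChainUnion fun x hx y hy hne hxy => ?_)
    simp only [coe_filter, mem_univ, true_and, Set.mem_ofPred_eq] at hx hy
    exact (hr_strictMono (lt_of_le_of_ne hxy hne)).ne (hx.trans hy.symm)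
  simpa using card_le_mul_card_image_of_maps_to (s := univ) (t := range (ao α))
    (fun x _ => mem_range.2 (hr_lt x)) (ao α) (fun i _ => hlevel i)

end ChainUnion

/-- The complete multipartite ordering whose parts are the levels of `f`, stacked in the order
of `β`. -/
abbrev weakOrder {α β : Type*} [Preorder β] (f : α → β) : PartialOrder α where
  le x y := x = y ∨ f x < f y
  lt x y := (x = y ∨ f x < f y) ∧ ¬(y = x ∨ f y < f x)
  lt_iff_le_not_ge _ _ := Iff.rfl
  le_refl x := Or.inl rfl
  le_trans := by
    rintro x y z (rfl | hxy) (rfl | hyz)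
    exacts [Or.inl rfl, Or.inr hyz, Or.inr hxy, Or.inr (hxy.trans hyz)]
  le_antisymm := by
    rintro x y (rfl | hxy) (hyx | hyx)
    exacts [rfl, rfl, hyx.symm, absurd hxy hyx.asymm]

section WeakOrder

variable {α β : Type*} [PartialOrder α] [LinearOrder β] {f : α → β}

lemma comparable_iff_of_le_iff (hf : ∀ x y, x ≤ y ↔ x = y ∨ f x < f y) (x y : α) :
    (x ≤ y ∨ y ≤ x) ↔ x = y ∨ f x ≠ f y := by
  rw [hf, hf, ne_iff_lt_or_gt]
  grind

/-- Two distinct elements `z, w` of one level and an element `u` of another level would make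
`z, u, w` a path in the comparability graph with `z, w` incomparable. -/
lemma IsChainUnion.eqOn_or_injOn (hf : ∀ x y, x ≤ y ↔ x = y ∨ f x < f y) {U : Finset α}
    (hU : IsChainUnion U) : (∀ x ∈ U, ∀ y ∈ U, f x = f y) ∨ Set.InjOn f U := by
  simp only [IsChainUnion, comparable_iff_of_le_iff hf] at hU
  by_contra! ⟨⟨a, ha, b, hb, hab⟩, hinj⟩
  obtain ⟨z, hz, w, hw, hzw, hne⟩ : ∃ z ∈ U, ∃ w ∈ U, f z = f w ∧ z ≠ w := by
    simpa [Set.InjOn] using hinj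
  have key : ∀ u ∈ U, f u ≠ f z → False := fun u hu hu' => by
    have := hU z hz u hu w hw (Or.inr hu'.symm) (Or.inr (hzw ▸ hu'))
    exact this.elim hne (· hzw)
  by_cases haz : f a = f z
  · exact key b hb (haz ▸ Ne.symm hab)
  · exact key a ha haz

lemma ao_le_of_card_level_le [Fintype α] (hf : ∀ x y, x ≤ y ↔ x = y ∨ f x < f y) {k : ℕ}
    (hlevel : ∀ b, #{x | f x = b} ≤ k) (hrange : #(univ.image f) ≤ k) : ao α ≤ k := by
  classical
  refine ao_le fun U hU => ?_
  obtain hlev | hinj := hU.eqOn_or_injOn hf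
  · obtain rfl | ⟨x, hx⟩ := U.eq_empty_or_nonempty
    · exact Nat.zero_le k
    · refine (card_le_card fun y hy => ?_).trans (hlevel (f x))
      simpa using (hlev x hx y hy).symm
  · rw [← card_image_of_injOn hinj]
    exact (card_le_card (image_subset_image (subset_univ U))).trans hrange

end WeakOrder

lemma ao_weakOrder_div_le {n k : ℕ} (hnk : n ≤ k * k) :
    @ao (Fin n) (Fin.fintype n) (weakOrder fun x : Fin n => x.val / k) ≤ k := by
  let := weakOrder fun x : Fin n => x.val / k
  refine ao_le_of_card_level_le (f := fun x : Fin n => x.val / k) (fun _ _ => Iff.rfl)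
    (fun b => ?_) ?_
  · calc #{x : Fin n | x.val / k = b} ≤ #(range k) := by
          refine card_le_card_of_injOn (fun x => x.val % k) (fun x _ => ?_) fun x hx y hy hxy => ?_
          · refine mem_range.2 (Nat.mod_lt _ (Nat.pos_of_ne_zero ?_))
            rintro rfl
            simpa using x.isLt.trans_le hnk
          · simp only [coe_filter, mem_univ, true_and, Set.mem_ofPred_eq] at hx hy hxy
            rw [Fin.ext_iff, ← Nat.div_add_mod x.val k, ← Nat.div_add_mod y.val k, hx, hy, hxy]
      _ = k := card_range k
  · calc #(univ.image fun x : Fin n => x.val / k) ≤ #(range k) := by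
          refine card_le_card (image_subset_iff.2 fun x _ => mem_range.2 ?_)
          exact Nat.div_lt_of_lt_mul (x.isLt.trans_le hnk)
      _ = k := card_range k

lemma Nat.ceil_sqrt_le_iff {n k : ℕ} : ⌈Real.sqrt n⌉₊ ≤ k ↔ n ≤ k * k := by
  rw [Nat.ceil_le, Real.sqrt_le_left (Nat.cast_nonneg k), sq]
  exact_mod_cast Iff.rfl

/-- the minimum of `ao` over all posets on `n` elements is `⌈√n⌉`:
every poset on `n` elements has `ao ≥ ⌈√n⌉` and some poset attains it. -/
theorem ao_all_posets (n : ℕ) :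
    sInf {m | ∃ P : PartialOrder (Fin n), @ao (Fin n) (Fin.fintype n) P = m}
        = ⌈Real.sqrt n⌉₊ ∧
      (∀ P : PartialOrder (Fin n), ⌈Real.sqrt n⌉₊ ≤ @ao (Fin n) (Fin.fintype n) P) ∧
      (∃ P : PartialOrder (Fin n), @ao (Fin n) (Fin.fintype n) P = ⌈Real.sqrt n⌉₊) := by
  set k := ⌈Real.sqrt n⌉₊
  have lower (P : PartialOrder (Fin n)) : k ≤ @ao (Fin n) (Fin.fintype n) P :=
    Nat.ceil_sqrt_le_iff.2 (by simpa using @card_le_ao_mul_ao (Fin n) P (Fin.fintype n))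
  have attained : @ao (Fin n) (Fin.fintype n) (weakOrder fun x : Fin n => x.val / k) = k :=
    (ao_weakOrder_div_le (Nat.ceil_sqrt_le_iff.1 le_rfl)).antisymm (lower _)
  refine ⟨le_antisymm (Nat.sInf_le ⟨_, attained⟩) ?_, lower, _, attained⟩
  exact le_csInf ⟨k, _, attained⟩ (by rintro _ ⟨P, rfl⟩; exact lower P)
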